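/- Let Ω ⊆ ℝ³ be open, let m, h : Ω → ℝ³ be continuously differentiable vector fields with curl h = 0 on Ω, and let v : Ω → ℝ³ be a smooth (C^∞) vector field with compact support contained in Ω. Then b(m, h, v) + b(v, m, h) = − ∫_Ω (m(x)·h(x)) div v(x) dx. -/

import Mathlib

open MeasureTheory Set
open scoped RealInnerProductSpace

noncomputable section

abbrev E3 : Type := EuclideanSpace ℝ (Fin 3)

/-- The partial derivative `∂ f^j / ∂ x_i` of a vector field. -/
def pd (f : E3 → E3) (i j : Fin 3) (x : E3) : ℝ :=
  fderiv ℝ (fun y => f y j) x (EuclideanSpace.single i 1)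

/-- The divergence of a vector field. -/
def vdiv (f : E3 → E3) (x : E3) : ℝ := ∑ i, pd f i i x

/-- The `k`-th component of the three-dimensional curl. -/
def ccomp (f : E3 → E3) (k : Fin 3) (x : E3) : ℝ :=
  pd f (k + 1) (k + 2) x - pd f (k + 2) (k + 1) x

/-- The trilinear form `b(m,h,u) = ∑_{i,j} ∫_Ω m^i ∂_i h^j u^j`. -/
def triB (Ω : Set E3) (m h u : E3 → E3) : ℝ :=
  ∑ i, ∑ j, ∫ x in Ω, m x i * pd h i j x * u x j

lemma ibp (F : E3 → ℝ) (hFc : HasCompactSupport F) (hF : ContDiff ℝ 1 F) (w : E3) :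
    ∫ x, fderiv ℝ F x w = 0 := by
  obtain ⟨C, hC⟩ := ContDiff.lipschitzWith_of_hasCompactSupport hFc hF one_ne_zero
  have h1 : LipschitzWith 0 (fun _ : E3 => (1:ℝ)) := LipschitzWith.const 1
  have key := LipschitzWith.integral_lineDeriv_mul_eq (μ := volume) h1 hC hFc (-w)
  have hc0 : ∀ x : E3, lineDeriv ℝ (fun _ : E3 => (1:ℝ)) x (-w) = 0 := by
    intro x
    rw [(differentiableAt_const (1:ℝ)).lineDeriv_eq_fderiv, fderiv_fun_const]
    simp
  simp only [hc0, zero_mul, integral_zero, neg_neg, mul_one] at key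
  have heq : ∀ x, lineDeriv ℝ F x w = fderiv ℝ F x w := fun x =>
    ((hF.differentiable one_ne_zero) x).lineDeriv_eq_fderiv
  simp only [heq] at key
  exact key.symm

lemma comp_diffAt {f : E3 → E3} {x : E3} (hf : DifferentiableAt ℝ f x) (j : Fin 3) :
    DifferentiableAt ℝ (fun y => f y j) x :=
  (EuclideanSpace.proj j : E3 →L[ℝ] ℝ).differentiableAt.comp x hf

lemma comp_contDiffAt {f : E3 → E3} {x : E3} (hf : ContDiffAt ℝ 1 f x) (j : Fin 3) :
    ContDiffAt ℝ 1 (fun y => f y j) x :=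
  (EuclideanSpace.proj j : E3 →L[ℝ] ℝ).contDiff.contDiffAt.comp x hf

lemma pd_eq {f : E3 → E3} {x : E3} (hf : DifferentiableAt ℝ f x) (i j : Fin 3) :
    pd f i j x = fderiv ℝ f x (EuclideanSpace.single i 1) j := by
  have h1 : HasFDerivAt (fun y => f y j)
      ((EuclideanSpace.proj j : E3 →L[ℝ] ℝ).comp (fderiv ℝ f x)) x :=
    (EuclideanSpace.proj j : E3 →L[ℝ] ℝ).hasFDerivAt.comp x hf.hasFDerivAt
  rw [pd, h1.fderiv]; rfl

lemma pd_contOn {f : E3 → E3} {Ω : Set E3} (hΩ : IsOpen Ω) (hf : ContDiffOn ℝ 1 f Ω)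
    (i j : Fin 3) : ContinuousOn (pd f i j) Ω := by
  have h1 : ContinuousOn (fderiv ℝ f) Ω := hf.continuousOn_fderiv_of_isOpen hΩ le_rfl
  have h2 : ContinuousOn (fun x => fderiv ℝ f x (EuclideanSpace.single i 1) j) Ω :=
    ((EuclideanSpace.proj j : E3 →L[ℝ] ℝ).continuous.comp
      ((ContinuousLinearMap.apply ℝ E3 (EuclideanSpace.single i 1)).continuous)).comp_continuousOn h1
  refine h2.congr fun x hx => ?_
  exact pd_eq ((hf.contDiffAt (hΩ.mem_nhds hx)).differentiableAt one_ne_zero) i j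

lemma pd_zero_of_nmem {f : E3 → E3} {x : E3} (hx : x ∉ tsupport f) (i j : Fin 3) :
    pd f i j x = 0 := by
  have hev : (fun y => f y j) =ᶠ[nhds x] fun _ => 0 := by
    filter_upwards [(isClosed_tsupport f).isOpen_compl.mem_nhds hx] with y hy
    simp [image_eq_zero_of_notMem_tsupport hy]
  rw [pd, hev.fderiv_eq, fderiv_fun_const]; simp

lemma intOn {f : E3 → ℝ} {Ω K : Set E3} (hK : IsCompact K) (hKΩ : K ⊆ Ω)
    (hf : ContinuousOn f Ω) (h0 : ∀ x ∉ K, f x = 0) : IntegrableOn f Ω := by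
  have h1 : IntegrableOn f K := (hf.mono hKΩ).integrableOn_compact hK
  have h2 : Function.support f ⊆ K := fun x hx => by
    by_contra hxK; exact hx (h0 x hxK)
  exact ((integrableOn_iff_integrable_of_support_subset h2).mp h1).integrableOn

lemma setInt_congr {Ω : Set E3} {f g : E3 → ℝ} (h : ∀ x, f x = g x) :
    ∫ x in Ω, f x = ∫ x in Ω, g x := by
  congr 1; exact funext h

/-- if `curl h = 0` on Ω and `v` is a smooth, compactly supported
(in Ω) vector field, then `b(m,h,v) + b(v,m,h) = −∫_Ω (m·h) div v`. -/
theorem stmt6 (Ω : Set E3) (hΩ : IsOpen Ω)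
    (m h v : E3 → E3)
    (hm : ContDiffOn ℝ 1 m Ω) (hh : ContDiffOn ℝ 1 h Ω)
    (hcurl : ∀ x ∈ Ω, ∀ k : Fin 3, ccomp h k x = 0)
    (hv : ContDiff ℝ (⊤ : ℕ∞) v) (hvsupp : HasCompactSupport v)
    (hvΩ : tsupport v ⊆ Ω) :
    triB Ω m h v + triB Ω v m h = - ∫ x in Ω, ⟪m x, h x⟫ * vdiv v x := by
  classical
  have hΩm : MeasurableSet Ω := hΩ.measurableSet
  have hKc : IsCompact (tsupport v) := hvsupp
  set g : E3 → ℝ := fun x => ∑ l, m x l * h x l with hgdef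
  set F : Fin 3 → E3 → ℝ := fun j x => g x * v x j with hFdef
  have hv1 : ContDiff ℝ 1 v := hv.of_le (by simp)
  have hmx : ∀ x ∈ Ω, DifferentiableAt ℝ m x := fun x hx =>
    (hm.contDiffAt (hΩ.mem_nhds hx)).differentiableAt one_ne_zero
  have hhx : ∀ x ∈ Ω, DifferentiableAt ℝ h x := fun x hx =>
    (hh.contDiffAt (hΩ.mem_nhds hx)).differentiableAt one_ne_zero
  have hvx : ∀ x, DifferentiableAt ℝ v x := fun x => (hv1.differentiable one_ne_zero) x
  -- symmetry of pd h on Ω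
  have hsym : ∀ x ∈ Ω, ∀ i j, pd h i j x = pd h j i x := by
    intro x hx i j
    have c0 := hcurl x hx 0; have c1 := hcurl x hx 1; have c2 := hcurl x hx 2
    simp only [ccomp, sub_eq_zero] at c0 c1 c2
    fin_cases i <;> fin_cases j <;> simp_all
  -- derivative of g on Ω
  have hgH : ∀ x ∈ Ω, HasFDerivAt g
      (∑ l, (m x l • fderiv ℝ (fun y => h y l) x + h x l • fderiv ℝ (fun y => m y l) x)) x := by
    intro x hx
    exact HasFDerivAt.fun_sum fun l _ =>
      ((comp_diffAt (hmx x hx) l).hasFDerivAt.mul (comp_diffAt (hhx x hx) l).hasFDerivAt)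
  -- F j is C¹
  have hFc : ∀ j, HasCompactSupport (F j) := by
    intro j
    apply HasCompactSupport.intro hKc
    intro x hx
    simp [hFdef, image_eq_zero_of_notMem_tsupport hx]
  have hF1 : ∀ j, ContDiff ℝ 1 (F j) := by
    intro j
    rw [contDiff_iff_contDiffAt]
    intro x
    by_cases hx : x ∈ Ω
    · have hmc : ContDiffAt ℝ 1 m x := hm.contDiffAt (hΩ.mem_nhds hx)
      have hhc : ContDiffAt ℝ 1 h x := hh.contDiffAt (hΩ.mem_nhds hx)
      have hg1 : ContDiffAt ℝ 1 g x :=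
        ContDiffAt.sum fun l _ => (comp_contDiffAt hmc l).mul (comp_contDiffAt hhc l)
      exact hg1.mul (comp_contDiffAt hv1.contDiffAt j)
    · have hxK : x ∉ tsupport v := fun hK' => hx (hvΩ hK')
      refine (contDiffAt_const (c := (0:ℝ))).congr_of_eventuallyEq ?_
      filter_upwards [(isClosed_tsupport v).isOpen_compl.mem_nhds hxK] with y hy
      simp [hFdef, image_eq_zero_of_notMem_tsupport hy]
  -- key integral identity
  have key : ∀ j, ∫ x in Ω,
      ((∑ i, (m x i * pd h j i x + h x i * pd m j i x)) * v x j + g x * pd v j j x) = 0 := by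
    intro j
    have h0 : ∫ x, fderiv ℝ (F j) x (EuclideanSpace.single j 1) = 0 :=
      ibp (F j) (hFc j) (hF1 j) _
    have hzero : ∀ x ∉ Ω, fderiv ℝ (F j) x (EuclideanSpace.single j 1) = 0 := by
      intro x hx
      have hxK : x ∉ tsupport v := fun hK' => hx (hvΩ hK')
      have hev : (F j) =ᶠ[nhds x] fun _ => 0 := by
        filter_upwards [(isClosed_tsupport v).isOpen_compl.mem_nhds hxK] with y hy
        simp [hFdef, image_eq_zero_of_notMem_tsupport hy]
      rw [hev.fderiv_eq, fderiv_fun_const]; simp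
    rw [← setIntegral_eq_integral_of_forall_compl_eq_zero hzero] at h0
    rw [← h0]
    apply setIntegral_congr_fun hΩm
    intro x hx
    have hvj : HasFDerivAt (fun y => v y j) (fderiv ℝ (fun y => v y j) x) x :=
      (comp_diffAt (hvx x) j).hasFDerivAt
    have hFj : HasFDerivAt (F j)
        (g x • fderiv ℝ (fun y => v y j) x +
          v x j • (∑ l, (m x l • fderiv ℝ (fun y => h y l) x + h x l • fderiv ℝ (fun y => m y l) x))) x :=
      (hgH x hx).mul hvj
    show (∑ i, (m x i * pd h j i x + h x i * pd m j i x)) * v x j + g x * pd v j j x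
        = fderiv ℝ (F j) x (EuclideanSpace.single j 1)
    rw [hFj.fderiv]
    simp only [pd, ContinuousLinearMap.add_apply, ContinuousLinearMap.smul_apply,
      ContinuousLinearMap.sum_apply, smul_eq_mul]
    rw [Finset.sum_mul, Finset.mul_sum, add_comm]
    congr 1
    exact Finset.sum_congr rfl fun i _ => by ring
  -- integrability
  have hvcomp : ∀ j, Continuous fun x => v x j := fun j =>
    (EuclideanSpace.proj j : E3 →L[ℝ] ℝ).continuous.comp hv.continuous
  have hmcomp : ∀ i, ContinuousOn (fun x => m x i) Ω := fun i =>
    (EuclideanSpace.proj i : E3 →L[ℝ] ℝ).continuous.comp_continuousOn hm.continuousOn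
  have hhcomp : ∀ i, ContinuousOn (fun x => h x i) Ω := fun i =>
    (EuclideanSpace.proj i : E3 →L[ℝ] ℝ).continuous.comp_continuousOn hh.continuousOn
  have hgcont : ContinuousOn g Ω := by
    apply continuousOn_finset_sum
    exact fun l _ => (hmcomp l).mul (hhcomp l)
  have hvzero : ∀ (j : Fin 3) (x : E3), x ∉ tsupport v → v x j = 0 := fun j x hx => by
    simp [image_eq_zero_of_notMem_tsupport hx]
  have hint1 : ∀ j i, IntegrableOn (fun x => m x i * pd h j i x * v x j) Ω :=
    fun j i => intOn hKc hvΩ (((hmcomp i).mul (pd_contOn hΩ hh j i)).mul (hvcomp j).continuousOn)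
      (fun x hx => by simp [hvzero j x hx])
  have hint2 : ∀ j i, IntegrableOn (fun x => v x j * pd m j i x * h x i) Ω :=
    fun j i => intOn hKc hvΩ (((hvcomp j).continuousOn.mul (pd_contOn hΩ hm j i)).mul (hhcomp i))
      (fun x hx => by simp [hvzero j x hx])
  have hintP : ∀ j, IntegrableOn
      (fun x => (∑ i, (m x i * pd h j i x + h x i * pd m j i x)) * v x j) Ω := by
    intro j
    refine intOn hKc hvΩ ?_ (fun x hx => by simp [hvzero j x hx])
    refine ContinuousOn.mul ?_ (hvcomp j).continuousOn
    apply continuousOn_finset_sum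
    exact fun i _ => ((hmcomp i).mul (pd_contOn hΩ hh j i)).add ((hhcomp i).mul (pd_contOn hΩ hm j i))
  have hintQ : ∀ j, IntegrableOn (fun x => g x * pd v j j x) Ω := fun j =>
    intOn hKc hvΩ (hgcont.mul (pd_contOn hΩ hv1.contDiffOn j j))
      (fun x hx => by simp [pd_zero_of_nmem hx])
  have key2 : ∀ j, ∫ x in Ω, (∑ i, (m x i * pd h j i x + h x i * pd m j i x)) * v x j
      = - ∫ x in Ω, g x * pd v j j x := by
    intro j
    have hk := key j
    rw [integral_add (hintP j) (hintQ j)] at hk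
    linarith
  have key3 : ∀ j, ∫ x in Ω, (∑ i, (m x i * pd h j i x + h x i * pd m j i x)) * v x j
      = ∑ i, ((∫ x in Ω, m x i * pd h j i x * v x j) + ∫ x in Ω, v x j * pd m j i x * h x i) := by
    intro j
    rw [setInt_congr (g := fun x => ∑ i, (m x i * pd h j i x * v x j + v x j * pd m j i x * h x i))
      (fun x => by rw [Finset.sum_mul]; exact Finset.sum_congr rfl fun i _ => by ring)]
    have hfs := integral_finset_sum (μ := volume.restrict Ω) Finset.univ
      (f := fun (i : Fin 3) (x : E3) => m x i * pd h j i x * v x j + v x j * pd m j i x * h x i)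
      (fun i _ => (hint1 j i).add (hint2 j i))
    refine hfs.trans (Finset.sum_congr rfl fun i _ => ?_)
    show (∫ x in Ω, (m x i * pd h j i x * v x j + v x j * pd m j i x * h x i)) = _
    exact integral_add (hint1 j i) (hint2 j i)
  have hinner : ∀ x : E3, (⟪m x, h x⟫ : ℝ) = g x := fun x => by
    simp [PiLp.inner_apply, RCLike.inner_apply, hgdef, mul_comm]
  have rhs : ∫ x in Ω, ⟪m x, h x⟫ * vdiv v x = ∑ j, ∫ x in Ω, g x * pd v j j x := by
    rw [setInt_congr (g := fun x => ∑ j, g x * pd v j j x)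
      (fun x => by rw [hinner, vdiv, Finset.mul_sum])]
    exact integral_finset_sum _ fun j _ => hintQ j
  have lhs1 : triB Ω m h v = ∑ j, ∑ i, ∫ x in Ω, m x i * pd h j i x * v x j := by
    rw [triB, Finset.sum_comm]
    refine Finset.sum_congr rfl fun j _ => Finset.sum_congr rfl fun i _ => ?_
    exact setIntegral_congr_fun hΩm fun x hx => by rw [hsym x hx i j]
  have lhs2 : triB Ω v m h = ∑ j, ∑ i, ∫ x in Ω, v x j * pd m j i x * h x i := by
    rw [triB, Finset.sum_comm]
  rw [lhs1, lhs2, ← Finset.sum_add_distrib, rhs, ← Finset.sum_neg_distrib]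
  refine Finset.sum_congr rfl fun j _ => ?_
  rw [← Finset.sum_add_distrib, ← key3 j, key2 j]
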